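/- Weak (Cautious) Monotonicity: if L_α = L_β, σ ⊢_k α and σ ⊢_k β, then σ * α ⊢_k β. -/

import Mathlib

/-! If `L_α = L_β`, then `α` and `β` have the same relevance degrees to every formula, so
`Γ_{σ,k,α} = Γ_{σ,k,β}`, which is consistent and entails `α`. In `σ * α` the new entry `α` is
maximally relevant to `β` and the most recent one, so it is processed first, and it changes no
relevance degree w.r.t. `β`. Since `α` is consistent with `Γ_{σ,k,β}`, putting it in first changes
none of the later consistency tests, so `Γ_{σ*α,k,β} ⊇ Γ_{σ,k,β}`, which entails `β`. -/

namespace BeliefSeq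

/-- Propositional formulas over a type `ν` of propositional variables,
with connectives ¬, ∧, ∨, →, ↔ and constants true, false. -/
inductive PropForm (ν : Type) : Type where
  | var : ν → PropForm ν
  | tru : PropForm ν
  | fls : PropForm ν
  | neg : PropForm ν → PropForm ν
  | conj : PropForm ν → PropForm ν → PropForm ν
  | disj : PropForm ν → PropForm ν → PropForm ν
  | impl : PropForm ν → PropForm ν → PropForm ν
  | biim : PropForm ν → PropForm ν → PropForm ν

namespace PropForm

variable {ν : Type}

/-- Classical (two-valued) evaluation of a formula under a valuation. -/
def eval (v : ν → Bool) : PropForm ν → Bool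
  | var x => v x
  | tru => true
  | fls => false
  | neg φ => !(φ.eval v)
  | conj φ ψ => φ.eval v && ψ.eval v
  | disj φ ψ => φ.eval v || ψ.eval v
  | impl φ ψ => !(φ.eval v) || ψ.eval v
  | biim φ ψ => φ.eval v == ψ.eval v

/-- The set `L(α)` of variables occurring syntactically in a formula. -/
def vars : PropForm ν → Set ν
  | var x => {x}
  | tru => ∅
  | fls => ∅
  | neg φ => φ.vars
  | conj φ ψ => φ.vars ∪ ψ.vars
  | disj φ ψ => φ.vars ∪ ψ.vars
  | impl φ ψ => φ.vars ∪ ψ.vars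
  | biim φ ψ => φ.vars ∪ ψ.vars

end PropForm

variable {ν : Type}

/-- `α ⇔ β` : logical equivalence (α ↔ β is a tautology). -/
def Equiv (α β : PropForm ν) : Prop := ∀ v, α.eval v = β.eval v

def Tautology (α : PropForm ν) : Prop := ∀ v, α.eval v = true

def Contradiction (α : PropForm ν) : Prop := ∀ v, α.eval v = false

/-- Classical consequence `Γ ⊢ γ`. -/
def Entails (Γ : Set (PropForm ν)) (γ : PropForm ν) : Prop :=
  ∀ v, (∀ φ ∈ Γ, φ.eval v = true) → γ.eval v = true

/-- Consistency (satisfiability) of a set of formulas. -/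
def Satisfiable (Γ : Set (PropForm ν)) : Prop :=
  ∃ v, ∀ φ ∈ Γ, φ.eval v = true

/-- `V` expresses `α`: α is logically equivalent to some formula
all of whose variables lie in `V`. -/
def Expresses (V : Set ν) (α : PropForm ν) : Prop :=
  ∃ β : PropForm ν, Equiv α β ∧ β.vars ⊆ V

/-- `L_α` : the smallest language of `α` (intersection of all sets of
variables expressing `α`). -/
def Lang (α : PropForm ν) : Set ν := ⋂₀ {V : Set ν | Expresses V α}

/-- Direct relevance (`0`-relevance): logical language overlap `L_α ∩ L_β ≠ ∅`. -/
def DirectRel (α β : PropForm ν) : Prop := (Lang α ∩ Lang β).Nonempty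

/-- `k`-relevance of `α`, `β` w.r.t. the belief sequence `σ`:
there is a chain `χ_1, …, χ_k` of formulas of `σ` with
`α, χ₁` directly relevant, each `χ_i, χ_{i+1}` directly relevant,
and `χ_k, β` directly relevant (for `k = 0` this is direct relevance). -/
def KRel (k : ℕ) (α β : PropForm ν) (σ : List (PropForm ν)) : Prop :=
  ∃ l : List (PropForm ν), l.length = k ∧ (∀ χ ∈ l, χ ∈ σ) ∧
    List.Chain' DirectRel (α :: (l ++ [β]))

/-- `rel(α,β,σ)` : the least `k` such that `α, β` are `k`-relevant w.r.t. `σ`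
(`∞ = ⊤` if they are irrelevant). -/
noncomputable def relDeg (α β : PropForm ν) (σ : List (PropForm ν)) : ℕ∞ :=
  sInf {n : ℕ∞ | ∃ k : ℕ, n = (k : ℕ∞) ∧ KRel k α β σ}

open Classical in
/-- The priority ordering imposed by the query `γ` on the (indexed) entries of `σ`:
more relevant first; among equally relevant entries, more recent
(larger index) first. -/
noncomputable def priority (γ : PropForm ν) (σ : List (PropForm ν)) :
    (ℕ × PropForm ν) → (ℕ × PropForm ν) → Bool :=
  fun a b =>
    decide (relDeg γ a.2 σ < relDeg γ b.2 σ ∨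
      (relDeg γ a.2 σ = relDeg γ b.2 σ ∧ b.1 ≤ a.1))

/-- The entries `δ_1, …, δ_n` of `σ` reordered by the priority above. -/
noncomputable def prioritized (γ : PropForm ν) (σ : List (PropForm ν)) :
    List (PropForm ν) :=
  ((σ.zipIdx.map Prod.swap).mergeSort (priority γ σ)).map Prod.snd

open Classical in
/-- The prioritized maxiconsistent set `Γ_{⟨σ,k,γ⟩}` : go through `δ_1, …, δ_n`
in priority order, skipping `δ_{i+1}` if `Γ^i ⊢ ¬δ_{i+1}` or `δ_{i+1}` is not
`k`-relevant to `γ` w.r.t. `σ`, and adding it otherwise. -/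
noncomputable def Gamma (σ : List (PropForm ν)) (k : ℕ) (γ : PropForm ν) :
    Set (PropForm ν) :=
  (prioritized γ σ).foldl
    (fun Γ δ =>
      if Entails Γ (PropForm.neg δ) ∨ (k : ℕ∞) < relDeg γ δ σ then Γ
      else insert δ Γ) ∅

/-- `σ ⊢_k γ` iff `Γ_{⟨σ,k,γ⟩} ⊢ γ`. -/
def InferK (σ : List (PropForm ν)) (k : ℕ) (γ : PropForm ν) : Prop :=
  Entails (Gamma σ k γ) γ

/-- `C_k(σ) = {γ | σ ⊢_k γ}`. -/
def Ck (σ : List (PropForm ν)) (k : ℕ) : Set (PropForm ν) :=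
  {γ | InferK σ k γ}

/-- Revision `σ * γ` : concatenation of `γ` at the (most recent) end of `σ`. -/
def revise (σ : List (PropForm ν)) (γ : PropForm ν) : List (PropForm ν) :=
  σ ++ [γ]

theorem _root_.List.mergeSort_eq_mergeSort_of_perm {τ : Type*} {le : τ → τ → Bool}
    (trans : ∀ a b c, le a b → le b c → le a c) (total : ∀ a b, le a b || le b a)
    {l₁ l₂ : List τ} (hp : l₁.Perm l₂)
    (antisymm : ∀ a ∈ l₁, ∀ b ∈ l₁, le a b → le b a → a = b) :
    l₁.mergeSort le = l₂.mergeSort le :=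
  List.Perm.eq_of_pairwise
    (fun a b ha hb => antisymm a ((List.mergeSort_perm _ _).mem_iff.1 ha)
      b (hp.mem_iff.2 ((List.mergeSort_perm _ _).mem_iff.1 hb)))
    (List.pairwise_mergeSort trans total _) (List.pairwise_mergeSort trans total _)
    (((List.mergeSort_perm _ _).trans hp).trans (List.mergeSort_perm _ _).symm)

theorem _root_.List.mergeSort_cons_of_forall_le {τ : Type*} {le : τ → τ → Bool}
    (trans : ∀ a b c, le a b → le b c → le a c) (total : ∀ a b, le a b || le b a)
    {a : τ} {l : List τ} (h : ∀ b ∈ l, le a b) :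
    (a :: l).mergeSort le = a :: l.mergeSort le := by
  obtain ⟨l₁, l₂, hcons, hl, hl₁⟩ := List.mergeSort_cons trans total a l
  obtain rfl : l₁ = [] := List.eq_nil_iff_forall_not_mem.2 fun b hb => by
    have hbl : b ∈ l := List.mem_mergeSort.1 (hl ▸ List.mem_append_left l₂ hb)
    simpa [h b hbl] using hl₁ b hb
  simp [hcons, hl]

namespace PropForm

@[simp]
lemma eval_neg (v : ν → Bool) (φ : PropForm ν) : (neg φ).eval v = !φ.eval v := rfl

end PropForm

open PropForm

section Entailment

variable {Γ Γ' : Set (PropForm ν)} {α δ : PropForm ν}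

lemma Entails.mono (h : Entails Γ α) (hΓ : Γ ⊆ Γ') : Entails Γ' α :=
  fun v hv => h v fun φ hφ => hv φ (hΓ hφ)

lemma Satisfiable.subset (h : Satisfiable Γ') (hΓ : Γ ⊆ Γ') : Satisfiable Γ :=
  let ⟨v, hv⟩ := h
  ⟨v, fun φ hφ => hv φ (hΓ hφ)⟩

lemma Satisfiable.insert_of_entails (h : Satisfiable Γ) (hα : Entails Γ α) :
    Satisfiable (insert α Γ) :=
  let ⟨v, hv⟩ := h
  ⟨v, Set.forall_mem_insert.2 ⟨hα v hv, hv⟩⟩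

lemma entails_neg_iff_not_satisfiable_insert :
    Entails Γ (neg δ) ↔ ¬ Satisfiable (insert δ Γ) := by
  simp only [Entails, Satisfiable, Set.forall_mem_insert, eval_neg, Bool.not_eq_eq_eq_not,
    Bool.not_true, not_exists, not_and]
  exact forall_congr' fun v => by cases δ.eval v <;> simp

end Entailment

section Relevance

variable {α β δ : PropForm ν} {σ σ' : List (PropForm ν)} {k : ℕ}

lemma kRel_iff : KRel k α δ σ ↔
    ∃ l : List (PropForm ν), l.length = k ∧ (∀ χ ∈ l, χ ∈ σ) ∧
      List.IsChain DirectRel (α :: (l ++ [δ])) :=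
  Iff.rfl

lemma isChain_directRel_cons_iff_of_lang_eq (hL : Lang α = Lang β) (l : List (PropForm ν)) :
    List.IsChain DirectRel (α :: l) ↔ List.IsChain DirectRel (β :: l) := by
  simp only [List.isChain_cons, DirectRel, hL]

lemma kRel_iff_of_lang_eq (hL : Lang α = Lang β) :
    KRel k α δ σ ↔ KRel k β δ σ := by
  simp only [kRel_iff, isChain_directRel_cons_iff_of_lang_eq hL]

lemma kRel_zero_iff : KRel 0 α δ σ ↔ DirectRel α δ := by
  simp [kRel_iff]

lemma KRel.lang_nonempty (h : KRel k α δ σ) : (Lang α).Nonempty := by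
  obtain ⟨l, -, -, hchain⟩ := h
  obtain ⟨y, hy⟩ : ∃ y, y ∈ (l ++ [δ]).head? := by cases l <;> simp
  exact (List.isChain_cons.1 hchain).1 y hy |>.mono Set.inter_subset_left

lemma KRel.mono (h : KRel k α δ σ) (hσ : ∀ χ ∈ σ, χ ∈ σ') : KRel k α δ σ' :=
  let ⟨l, hlen, hmem, hchain⟩ := h
  ⟨l, hlen, fun χ hχ => hσ χ (hmem χ hχ), hchain⟩

lemma relDeg_le_relDeg_of_forall_kRel {α' δ' : PropForm ν}
    (h : ∀ k, KRel k α δ σ → ∃ k' ≤ k, KRel k' α' δ' σ') :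
    relDeg α' δ' σ' ≤ relDeg α δ σ := by
  unfold relDeg
  refine le_sInf ?_
  rintro _ ⟨k, rfl, hk⟩
  obtain ⟨k', hk', hk'rel⟩ := h k hk
  refine (sInf_le ?_).trans (Nat.cast_le.2 hk')
  exact ⟨k', rfl, hk'rel⟩

lemma relDeg_eq_of_lang_eq (hL : Lang α = Lang β) : relDeg α δ σ = relDeg β δ σ := by
  simp only [relDeg, kRel_iff_of_lang_eq hL]

lemma relDeg_le_relDeg_of_lang_eq (hL : Lang α = Lang β) : relDeg β α σ ≤ relDeg β δ σ :=
  relDeg_le_relDeg_of_forall_kRel fun k hk =>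
    ⟨0, k.zero_le, kRel_zero_iff.2 (by rw [DirectRel, hL, Set.inter_self]; exact hk.lang_nonempty)⟩

/-- A chain through `α` can be cut at the last occurrence of `α`. -/
lemma KRel.of_revise (hL : Lang α = Lang β) (h : KRel k β δ (revise σ α)) :
    ∃ k' ≤ k, KRel k' β δ σ := by
  obtain ⟨l, rfl, hmem, hchain⟩ := h
  by_cases hα : α ∈ l
  · obtain ⟨tail, init, hl, hα_tail⟩ := List.eq_append_cons_of_mem (List.mem_reverse.2 hα)
    replace hl : l = init.reverse ++ α :: tail.reverse := by
      simpa using congrArg List.reverse hl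
    refine ⟨tail.reverse.length, by simp [hl]; omega, tail.reverse, rfl, fun χ hχ => ?_, ?_⟩
    · have hχα : χ ≠ α := by rintro rfl; exact hα_tail (List.mem_reverse.1 hχ)
      simpa [revise, hχα] using hmem χ (by simp [hl, hχ])
    · refine (isChain_directRel_cons_iff_of_lang_eq hL _).1 (hchain.suffix ⟨β :: init.reverse, ?_⟩)
      simp [hl]
  · refine ⟨l.length, le_rfl, l, rfl, fun χ hχ => ?_, hchain⟩
    have hχα : χ ≠ α := by rintro rfl; exact hα hχ
    simpa [revise, hχα] using hmem χ hχ

lemma relDeg_revise (hL : Lang α = Lang β) : relDeg β δ (revise σ α) = relDeg β δ σ :=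
  le_antisymm
    (relDeg_le_relDeg_of_forall_kRel fun k hk =>
      ⟨k, le_rfl, hk.mono fun _ hχ => List.mem_append_left _ hχ⟩)
    (relDeg_le_relDeg_of_forall_kRel fun _ hk => hk.of_revise hL)

end Relevance

section GreedyFold

variable {skip : PropForm ν → Prop} [DecidablePred skip] {Γ : Set (PropForm ν)}
  {α δ : PropForm ν} {L : List (PropForm ν)}

open Classical in
/-- The step `Γ^i ↦ Γ^{i+1}` of `Gamma`, with the relevance test abstracted to `skip`. -/
noncomputable def greedyStep (skip : PropForm ν → Prop) [DecidablePred skip]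
    (Γ : Set (PropForm ν)) (δ : PropForm ν) : Set (PropForm ν) :=
  if Entails Γ (neg δ) ∨ skip δ then Γ else insert δ Γ

lemma gamma_eq_foldl (σ : List (PropForm ν)) (k : ℕ) (γ : PropForm ν) :
    Gamma σ k γ = (prioritized γ σ).foldl (greedyStep fun δ => (k : ℕ∞) < relDeg γ δ σ) ∅ :=
  rfl

lemma greedyStep_congr {skip' : PropForm ν → Prop} [DecidablePred skip']
    (h : ∀ δ, skip δ ↔ skip' δ) : greedyStep skip = greedyStep skip' := by
  obtain rfl : skip = skip' := funext fun δ => propext (h δ)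
  congr

lemma subset_foldl_greedyStep : Γ ⊆ L.foldl (greedyStep skip) Γ := by
  induction L generalizing Γ with
  | nil => exact subset_rfl
  | cons δ L ih =>
    refine subset_trans ?_ ih
    unfold greedyStep
    split_ifs
    exacts [subset_rfl, Set.subset_insert δ Γ]

lemma Satisfiable.foldl_greedyStep (h : Satisfiable Γ) :
    Satisfiable (L.foldl (greedyStep skip) Γ) := by
  induction L generalizing Γ with
  | nil => exact h
  | cons δ L ih =>
    refine ih ?_
    unfold greedyStep
    split_ifs with hδ
    · exact h
    · exact not_not.1 (entails_neg_iff_not_satisfiable_insert.not.1 (not_or.1 hδ).1)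

lemma greedyStep_insert (h : Satisfiable (insert α (greedyStep skip Γ δ))) :
    greedyStep skip (insert α Γ) δ = insert α (greedyStep skip Γ δ) := by
  unfold greedyStep at h ⊢
  by_cases hskip : skip δ
  · simp [hskip]
  by_cases hΓ : Entails Γ (neg δ)
  · simp [hskip, hΓ, hΓ.mono (Set.subset_insert α Γ)]
  · have hαΓ : ¬ Entails (insert α Γ) (neg δ) := by
      rw [entails_neg_iff_not_satisfiable_insert, Set.insert_comm, not_not]
      simpa [hskip, hΓ] using h
    simp [hskip, hΓ, hαΓ, Set.insert_comm]

lemma foldl_greedyStep_insert (h : Satisfiable (insert α (L.foldl (greedyStep skip) Γ))) :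
    L.foldl (greedyStep skip) (insert α Γ) = insert α (L.foldl (greedyStep skip) Γ) := by
  induction L generalizing Γ with
  | nil => rfl
  | cons δ L ih =>
    rw [List.foldl_cons, List.foldl_cons, greedyStep_insert, ih h]
    exact h.subset (Set.insert_subset_insert subset_foldl_greedyStep)

lemma foldl_greedyStep_subset_foldl_greedyStep_cons
    (h : Satisfiable (insert α (L.foldl (greedyStep skip) Γ))) :
    L.foldl (greedyStep skip) Γ ⊆ (α :: L).foldl (greedyStep skip) Γ := by
  rw [List.foldl_cons]
  by_cases hstep : greedyStep skip Γ α = Γ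
  · rw [hstep]
  · have hins : greedyStep skip Γ α = insert α Γ := by
      unfold greedyStep at hstep ⊢
      exact if_neg fun hc => hstep (if_pos hc)
    rw [hins, foldl_greedyStep_insert h]
    exact Set.subset_insert α _

lemma satisfiable_gamma (σ : List (PropForm ν)) (k : ℕ) (γ : PropForm ν) :
    Satisfiable (Gamma σ k γ) :=
  Satisfiable.foldl_greedyStep ⟨fun _ => true, by simp⟩

end GreedyFold

section Priority

variable {γ α β : PropForm ν} {σ : List (PropForm ν)}

/-- `priority` is the preorder pulled back from the lexicographic order along this key. -/
noncomputable def priorityKey (γ : PropForm ν) (σ : List (PropForm ν)) (a : ℕ × PropForm ν) :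
    ℕ∞ ×ₗ ℕᵒᵈ :=
  toLex (relDeg γ a.2 σ, OrderDual.toDual a.1)

lemma priority_iff {a b : ℕ × PropForm ν} :
    priority γ σ a b ↔ priorityKey γ σ a ≤ priorityKey γ σ b := by
  simp [priority, priorityKey, Prod.Lex.toLex_le_toLex]

lemma priority_trans (a b c : ℕ × PropForm ν) :
    priority γ σ a b → priority γ σ b c → priority γ σ a c := by
  simp only [priority_iff]
  exact le_trans

lemma priority_total (a b : ℕ × PropForm ν) : priority γ σ a b || priority γ σ b a := by
  simpa only [Bool.or_eq_true, priority_iff] using le_total _ _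

lemma fst_eq_of_priority_of_priority {a b : ℕ × PropForm ν}
    (hab : priority γ σ a b) (hba : priority γ σ b a) : a.1 = b.1 := by
  have h := le_antisymm (priority_iff.1 hab) (priority_iff.1 hba)
  simpa [priorityKey] using congrArg (fun p => OrderDual.ofDual (ofLex p).2) h

lemma priority_eq_of_lang_eq (hL : Lang α = Lang β) : priority α σ = priority β σ := by
  funext a b
  simp only [priority, relDeg_eq_of_lang_eq hL]

lemma priority_revise (hL : Lang α = Lang β) : priority β (revise σ α) = priority β σ := by
  funext a b
  simp only [priority, relDeg_revise hL]

lemma prioritized_revise (hL : Lang α = Lang β) :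
    prioritized β (revise σ α) = α :: prioritized β σ := by
  have hentries :
      (revise σ α).zipIdx.map Prod.swap = σ.zipIdx.map Prod.swap ++ [(σ.length, α)] := by
    simp [revise, List.zipIdx_append]
  have hanti : ∀ a ∈ (revise σ α).zipIdx.map Prod.swap, ∀ b ∈ (revise σ α).zipIdx.map Prod.swap,
      priority β σ a b → priority β σ b a → a = b := by
    have hnodup : (((revise σ α).zipIdx.map Prod.swap).map Prod.fst).Nodup := by
      simp [List.map_map, Function.comp_def, List.nodup_range']
    exact fun a ha b hb hab hba =>
      List.inj_on_of_nodup_map hnodup ha hb (fst_eq_of_priority_of_priority hab hba)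
  have hfirst : ∀ b ∈ σ.zipIdx.map Prod.swap, priority β σ (σ.length, α) b := by
    rintro _ hb
    obtain ⟨⟨δ, i⟩, hi, rfl⟩ := List.mem_map.1 hb
    have hiσ : i < σ.length := by simpa using List.snd_lt_of_mem_zipIdx hi
    exact priority_iff.2 <| Prod.Lex.toLex_mono
      ⟨relDeg_le_relDeg_of_lang_eq hL, OrderDual.toDual_le_toDual.2 hiσ.le⟩
  rw [hentries] at hanti
  unfold prioritized
  rw [priority_revise hL, hentries, List.mergeSort_eq_mergeSort_of_perm priority_trans
    priority_total (List.perm_append_singleton _ _) hanti,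
    List.mergeSort_cons_of_forall_le priority_trans priority_total hfirst, List.map_cons]

end Priority

section PrioritizedSet

variable {α β : PropForm ν} {σ : List (PropForm ν)} {k : ℕ}

lemma gamma_eq_of_lang_eq (hL : Lang α = Lang β) : Gamma σ k α = Gamma σ k β := by
  rw [gamma_eq_foldl, gamma_eq_foldl, prioritized, prioritized, priority_eq_of_lang_eq hL,
    greedyStep_congr fun δ => by rw [relDeg_eq_of_lang_eq hL]]

lemma gamma_subset_gamma_revise (hL : Lang α = Lang β)
    (h : Satisfiable (insert α (Gamma σ k β))) : Gamma σ k β ⊆ Gamma (revise σ α) k β := by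
  rw [gamma_eq_foldl, gamma_eq_foldl, prioritized_revise hL,
    greedyStep_congr (skip := fun δ => k < relDeg β δ (revise σ α)) fun δ => by
      rw [relDeg_revise hL]]
  exact foldl_greedyStep_subset_foldl_greedyStep_cons h

end PrioritizedSet

/-- Weak/Cautious Monotonicity: if `L_α = L_β`, `σ ⊢_k α`
and `σ ⊢_k β`, then `σ * α ⊢_k β`. -/
theorem weak_monotonicity {ν : Type} (α β : PropForm ν)
    (hL : Lang α = Lang β) (σ : List (PropForm ν)) (k : ℕ)
    (hα : InferK σ k α) (hβ : InferK σ k β) :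
    InferK (revise σ α) k β := by
  have hαβ : Entails (Gamma σ k β) α := gamma_eq_of_lang_eq hL ▸ hα
  exact Entails.mono hβ <| gamma_subset_gamma_revise hL <|
    (satisfiable_gamma σ k β).insert_of_entails hαβ

end BeliefSeq
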